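/- In Strings and Coins on the complete bipartite graph K(2, b) with b ≥ 2, Player 1 wins when b is odd and Player 2 wins when b is even. -/

import Mathlib

/-!
A position reachable from `K(2, b)` is described by the leaf sets `L₀`, `L₁` of the two hubs.
Removing a hanging edge (a leaf joined to one hub only) captures that leaf, so such moves are
free; the only real decisions are cuts of intact paths `0 – x – 1`. By induction on the edges,
the mover collects every live vertex except `conceded m`, where `m = |L₀ ∩ L₁|` counts the intact
paths: once no hanging edge is left the mover must cut a path, handing the opponent a position
with `m - 1` intact paths, whence `conceded m + conceded (m - 1) = m + 2` for `m ≥ 2` (for `m = 1`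
the cut captures a hub, and the mover keeps the turn and everything else). Thus the second
player gets `(b - 1) / 2` of the `b + 2` vertices for odd `b` and `b / 2 + 3` for even `b`.
-/

/-- A position in Strings and Coins: a finite multigraph, with vertex set `verts`
and a multiset of (possibly loop) edges, each given as an ordered pair. -/
structure SCPos (V : Type) where
  verts : Finset V
  edges : Multiset (V × V)

variable {V : Type} [DecidableEq V]

/-- Number of edges incident to `v` (each edge, including a loop, counted once);
only being zero or nonzero matters for captures. -/
def SCPos.deg (p : SCPos V) (v : V) : ℕ :=
  (p.edges.filter (fun f => f.1 = v ∨ f.2 = v)).card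

/-- Degree of `v`, where a loop at `v` contributes 2. -/
def SCPos.degree (p : SCPos V) (v : V) : ℕ :=
  (p.edges.map (fun e => (if e.1 = v then 1 else 0) + (if e.2 = v then 1 else 0))).sum

/-- The position obtained by removing one copy of edge `e`. -/
def SCPos.remove (p : SCPos V) (e : V × V) : SCPos V :=
  ⟨p.verts, p.edges.erase e⟩

/-- The number of vertices captured by removing edge `e` from `p`:
endpoints of `e` whose degree drops to zero. -/
def SCPos.caps (p : SCPos V) (e : V × V) : ℕ :=
  (p.verts.filter (fun v => (v = e.1 ∨ v = e.2) ∧ (p.remove e).deg v = 0)).card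

/-- Optimal score `(mover's points, opponent's points)` of Strings and Coins,
under play where each player maximizes their own number of captured vertices.
A player who captures at least one vertex moves again. -/
noncomputable def SCPos.score (p : SCPos V) : ℕ × ℕ :=
  if h : p.edges = 0 then (0, 0)
  else
    (p.edges.toList.attach.map (fun ⟨e, he⟩ =>
      let s := (p.remove e).score
      let c := p.caps e
      if c = 0 then (s.2, s.1) else (s.1 + c, s.2))).foldl
      (fun best o => if best.1 ≤ o.1 then o else best) (0, 0)
termination_by p.edges.card
decreasing_by
  exact Multiset.card_erase_lt_of_mem (Multiset.mem_toList.mp he)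

/-- The cycle graph `C_n` as a Strings and Coins position. -/
def cyclePos (n : ℕ) : SCPos ℕ :=
  ⟨Finset.range n, ((List.range n).map (fun i => (i, (i + 1) % n)) : List (ℕ × ℕ))⟩

/-- The friendship graph `F_n`: `n` triangles sharing the common vertex `0`. -/
def friendshipPos (n : ℕ) : SCPos ℕ :=
  ⟨Finset.range (2 * n + 1),
   (((List.range n).flatMap fun i =>
      [(0, 2 * i + 1), (0, 2 * i + 2), (2 * i + 1, 2 * i + 2)]) : List (ℕ × ℕ))⟩

/-- The pinwheel graph `PW_n`: `n` copies of `C_4` sharing the common vertex `0`. -/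
def pinwheelPos (n : ℕ) : SCPos ℕ :=
  ⟨Finset.range (3 * n + 1),
   (((List.range n).flatMap fun i =>
      [(0, 3 * i + 1), (3 * i + 1, 3 * i + 2), (3 * i + 2, 3 * i + 3), (3 * i + 3, 0)]) :
     List (ℕ × ℕ))⟩

/-- The loopy star `L_n`: center `0`, outer vertices `1, …, n`, each joined to the
center by an edge and carrying one loop. -/
def loopyStarPos (n : ℕ) : SCPos ℕ :=
  ⟨Finset.range (n + 1),
   (((List.range n).flatMap fun i => [(0, i + 1), (i + 1, i + 1)]) : List (ℕ × ℕ))⟩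

/-- The double loopy star `L(n,2)`: center `0`, outer vertices `1, …, n`, each joined
to the center by an edge and carrying two loops. -/
def doubleLoopyStarPos (n : ℕ) : SCPos ℕ :=
  ⟨Finset.range (n + 1),
   (((List.range n).flatMap fun i => [(0, i + 1), (i + 1, i + 1), (i + 1, i + 1)]) :
     List (ℕ × ℕ))⟩

/-- The complete bipartite graph `K(1, b)` (a star with `b` leaves). -/
def starPos (b : ℕ) : SCPos ℕ :=
  ⟨Finset.range (b + 1), (((List.range b).map fun i => (0, i + 1)) : List (ℕ × ℕ))⟩

/-- The complete bipartite graph `K(2, b)`: part `{0, 1}` and part `{2, …, b+1}`. -/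
def k2bPos (b : ℕ) : SCPos ℕ :=
  ⟨Finset.range (b + 2),
   (((List.range b).flatMap fun j => [(0, j + 2), (1, j + 2)]) : List (ℕ × ℕ))⟩

/-- The balloon path `BP_n`: a path on vertices `0, …, n-1` with one loop at each vertex. -/
def balloonPathPos (n : ℕ) : SCPos ℕ :=
  ⟨Finset.range n,
   ((((List.range (n - 1)).map fun i => (i, i + 1)) ++
     ((List.range n).map fun i => (i, i))) : List (ℕ × ℕ))⟩

/-- The loopy cycle `C_(n,1)`: the cycle `C_n` with one extra loop at vertex `0`. -/
def loopyCyclePos (n : ℕ) : SCPos ℕ :=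
  ⟨Finset.range n, (0, 0) ::ₘ (cyclePos n).edges⟩

/-- The Strings and Coins position of a finite simple graph: all vertices,
and one (arbitrarily oriented) edge for each edge of the graph. -/
noncomputable def posOfGraph {W : Type} [Fintype W] [DecidableEq W]
    (G : SimpleGraph W) [DecidableRel G.Adj] : SCPos W :=
  ⟨Finset.univ, G.edgeFinset.val.map Quot.out⟩

open Finset

theorem List.foldl_argmax_spec {α β : Type*} [LinearOrder β] (f : α → β) (a : α) (l : List α) :
    l.foldl (fun best o => if f best ≤ f o then o else best) a ∈ a :: l ∧
      ∀ o ∈ a :: l, f o ≤ f (l.foldl (fun best o => if f best ≤ f o then o else best) a) := by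
  induction l generalizing a with
  | nil => simp
  | cons b t ih =>
    obtain ⟨hmem, hle⟩ := ih (if f a ≤ f b then b else a)
    refine ⟨?_, ?_⟩
    · split_ifs at hmem <;> grind
    · intro o ho
      rcases List.mem_cons.1 ho with rfl | ho
      · exact le_trans (by split_ifs <;> order) (hle _ List.mem_cons_self)
      rcases List.mem_cons.1 ho with rfl | ho
      · exact le_trans (by split_ifs <;> order) (hle _ List.mem_cons_self)
      · exact hle o (List.mem_cons_of_mem _ ho)

namespace SCPos

/-- The outcome of the move `e`, as weighed inside `SCPos.score`. -/
noncomputable def moveOutcome (p : SCPos V) (e : V × V) : ℕ × ℕ :=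
  if p.caps e = 0 then ((p.remove e).score.2, (p.remove e).score.1)
  else ((p.remove e).score.1 + p.caps e, (p.remove e).score.2)

def liveCount (p : SCPos V) : ℕ := #{v ∈ p.verts | p.deg v ≠ 0}

theorem score_of_edges_eq_zero {p : SCPos V} (h : p.edges = 0) : p.score = (0, 0) := by
  rw [score, dif_pos h]

theorem score_eq_foldl {p : SCPos V} (h : p.edges ≠ 0) :
    p.score = (p.edges.toList.map p.moveOutcome).foldl
      (fun best o => if best.1 ≤ o.1 then o else best) (0, 0) := by
  rw [score, dif_neg h, ← List.attach_map_val (f := p.moveOutcome)]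
  rfl

theorem exists_score_eq_moveOutcome {p : SCPos V} (h : p.edges ≠ 0) :
    ∃ e ∈ p.edges, p.score = p.moveOutcome e := by
  obtain ⟨a, t, hl⟩ := List.exists_cons_of_ne_nil (mt Multiset.toList_eq_nil.1 h)
  obtain ⟨hmem, -⟩ := List.foldl_argmax_spec Prod.fst (p.moveOutcome a) (t.map p.moveOutcome)
  rw [← List.map_cons, ← hl, List.mem_map] at hmem
  obtain ⟨e, he, hmax⟩ := hmem
  refine ⟨e, Multiset.mem_toList.1 he, ?_⟩
  rw [score_eq_foldl h, hl, List.map_cons, List.foldl_cons, if_pos (Nat.zero_le _), hmax]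

theorem moveOutcome_fst_le_score_fst {p : SCPos V} {e : V × V} (he : e ∈ p.edges) :
    (p.moveOutcome e).1 ≤ p.score.1 := by
  have h : p.edges ≠ 0 := fun h0 => by simp [h0] at he
  obtain ⟨a, t, hl⟩ := List.exists_cons_of_ne_nil (mt Multiset.toList_eq_nil.1 h)
  obtain ⟨-, hle⟩ := List.foldl_argmax_spec Prod.fst (p.moveOutcome a) (t.map p.moveOutcome)
  rw [score_eq_foldl h, hl, List.map_cons, List.foldl_cons, if_pos (Nat.zero_le _)]
  refine hle _ ?_
  rw [← List.map_cons, ← hl]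
  exact List.mem_map_of_mem (Multiset.mem_toList.2 he)

theorem deg_eq_deg_remove_add {p : SCPos V} {e : V × V} (he : e ∈ p.edges) (v : V) :
    p.deg v = (p.remove e).deg v + if e.1 = v ∨ e.2 = v then 1 else 0 := by
  obtain ⟨t, ht⟩ := Multiset.exists_cons_of_mem he
  simp only [deg, remove, ht, Multiset.erase_cons_head, Multiset.filter_cons]
  split_ifs <;> simp

theorem deg_ne_zero_iff {p : SCPos V} {v : V} :
    p.deg v ≠ 0 ↔ ∃ e ∈ p.edges, e.1 = v ∨ e.2 = v := by
  simp only [deg, Ne, Multiset.card_eq_zero, Multiset.filter_eq_nil, not_forall, not_not,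
    exists_prop]

theorem liveCount_eq_liveCount_remove_add_caps {p : SCPos V} {e : V × V} (he : e ∈ p.edges) :
    p.liveCount = (p.remove e).liveCount + p.caps e := by
  have hverts : (p.remove e).verts = p.verts := rfl
  rw [liveCount, liveCount, caps, hverts, card_filter, card_filter, card_filter,
    ← sum_add_distrib]
  refine sum_congr rfl fun v _ => ?_
  rw [deg_eq_deg_remove_add he v]
  by_cases hv : v = e.1 ∨ v = e.2
  · have : e.1 = v ∨ e.2 = v := by tauto
    by_cases h0 : (p.remove e).deg v = 0 <;> simp [this, hv, h0]
  · have : ¬(e.1 = v ∨ e.2 = v) := by tauto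
    simp [hv, this]

theorem moveOutcome_fst_add_snd (p : SCPos V) (e : V × V) :
    (p.moveOutcome e).1 + (p.moveOutcome e).2 =
      (p.remove e).score.1 + (p.remove e).score.2 + p.caps e := by
  unfold moveOutcome
  split_ifs <;> omega

theorem score_fst_add_score_snd (p : SCPos V) : p.score.1 + p.score.2 = p.liveCount := by
  induction hc : Multiset.card p.edges using Nat.strong_induction_on generalizing p with
  | _ n ih =>
  by_cases h : p.edges = 0
  · simp [score_of_edges_eq_zero h, liveCount, deg, h]
  obtain ⟨e, he, hs⟩ := exists_score_eq_moveOutcome h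
  have hlt : Multiset.card (p.remove e).edges < n := hc ▸ Multiset.card_erase_lt_of_mem he
  rw [hs, moveOutcome_fst_add_snd, ih _ hlt _ rfl, liveCount_eq_liveCount_remove_add_caps he]

theorem moveOutcome_fst_of_caps_eq_zero {p : SCPos V} {e : V × V} {k : ℕ} (hc : p.caps e = 0)
    (h : (p.remove e).score.1 + k = (p.remove e).liveCount) : (p.moveOutcome e).1 = k := by
  have := score_fst_add_score_snd (p.remove e)
  simp only [moveOutcome, hc, if_true]
  omega

theorem moveOutcome_fst_add_of_caps_ne_zero {p : SCPos V} {e : V × V} {k : ℕ} (he : e ∈ p.edges)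
    (hc : p.caps e ≠ 0) (h : (p.remove e).score.1 + k = (p.remove e).liveCount) :
    (p.moveOutcome e).1 + k = p.liveCount := by
  have := liveCount_eq_liveCount_remove_add_caps he
  simp only [moveOutcome, hc, if_false]
  omega

theorem score_fst_add_eq_of_forall_of_exists {p : SCPos V} {k t : ℕ} (h : p.edges ≠ 0)
    (hle : ∀ e ∈ p.edges, (p.moveOutcome e).1 + k ≤ t)
    (hex : ∃ e ∈ p.edges, t ≤ (p.moveOutcome e).1 + k) : p.score.1 + k = t := by
  obtain ⟨e, he, hs⟩ := exists_score_eq_moveOutcome h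
  obtain ⟨e', he', ht⟩ := hex
  have hopt := moveOutcome_fst_le_score_fst he'
  have hbound := hle e he
  rw [hs] at hopt ⊢
  omega

end SCPos

def conceded : ℕ → ℕ
  | 0 => 0
  | 1 => 0
  | m + 2 => m + 4 - conceded (m + 1) -- never truncated, by `conceded_odd_even`

theorem conceded_odd_even (k : ℕ) : conceded (2 * k + 1) = k ∧ conceded (2 * k + 2) = k + 4 := by
  induction k with
  | zero => simp [conceded]
  | succ k ih =>
    have hodd : conceded (2 * (k + 1) + 1) = k + 1 := by
      rw [show 2 * (k + 1) + 1 = 2 * k + 1 + 2 by ring, conceded, ih.2]; omega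
    refine ⟨hodd, ?_⟩
    rw [show 2 * (k + 1) + 2 = 2 * k + 2 + 2 by ring, conceded,
      show 2 * k + 2 + 1 = 2 * (k + 1) + 1 by ring, hodd]
    omega

theorem conceded_pred_add_conceded {m : ℕ} (hm : 2 ≤ m) :
    conceded (m - 1) + conceded m = m + 2 := by
  obtain ⟨j, rfl⟩ := Nat.exists_eq_add_of_le' hm
  have hle : conceded (j + 1) ≤ j + 4 := by
    obtain ⟨k, rfl | rfl⟩ := Nat.even_or_odd' j
    · rw [(conceded_odd_even k).1]; omega
    · rw [(conceded_odd_even k).2]; omega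
  rw [show j + 2 - 1 = j + 1 by omega, conceded]
  omega

theorem conceded_eq_zero_of_le_one {m : ℕ} (hm : m ≤ 1) : conceded m = 0 := by
  interval_cases m <;> rfl

def k2SubPos (n : ℕ) (L₀ L₁ : Finset ℕ) : SCPos ℕ :=
  ⟨range n, L₀.val.map ((0 : ℕ), ·) + L₁.val.map ((1 : ℕ), ·)⟩

section K2Sub

variable {n : ℕ} {L₀ L₁ : Finset ℕ}

theorem mem_k2SubPos_edges {e : ℕ × ℕ} :
    e ∈ (k2SubPos n L₀ L₁).edges ↔ (∃ x ∈ L₀, (0, x) = e) ∨ ∃ x ∈ L₁, (1, x) = e := by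
  simp [k2SubPos]

theorem k2SubPos_edges_eq_zero_iff : (k2SubPos n L₀ L₁).edges = 0 ↔ L₀ = ∅ ∧ L₁ = ∅ := by
  simp [k2SubPos]

theorem k2SubPos_remove_zero {x : ℕ} (hx : x ∈ L₀) :
    (k2SubPos n L₀ L₁).remove (0, x) = k2SubPos n (L₀.erase x) L₁ := by
  simp only [k2SubPos, SCPos.remove, SCPos.mk.injEq, true_and]
  rw [Multiset.erase_add_left_pos _ (Multiset.mem_map_of_mem _ hx), erase_val,
    Multiset.map_erase _ (Prod.mk_right_injective 0)]

theorem k2SubPos_remove_one {x : ℕ} (hx : x ∈ L₁) :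
    (k2SubPos n L₀ L₁).remove (1, x) = k2SubPos n L₀ (L₁.erase x) := by
  simp only [k2SubPos, SCPos.remove, SCPos.mk.injEq, true_and]
  rw [Multiset.erase_add_right_pos _ (Multiset.mem_map_of_mem _ hx), erase_val,
    Multiset.map_erase _ (Prod.mk_right_injective 1)]

theorem k2SubPos_deg_ne_zero_iff {v : ℕ} :
    (k2SubPos n L₀ L₁).deg v ≠ 0 ↔ (∃ x ∈ L₀, v = 0 ∨ v = x) ∨ ∃ x ∈ L₁, v = 1 ∨ v = x := by
  simp only [SCPos.deg_ne_zero_iff, mem_k2SubPos_edges, or_and_right, exists_or]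
  simp [eq_comm]

theorem liveCount_k2SubPos (hn : 2 ≤ n) (h₀ : L₀ ⊆ Ico 2 n) (h₁ : L₁ ⊆ Ico 2 n) :
    (k2SubPos n L₀ L₁).liveCount = #(L₀ ∪ L₁) + min 1 #L₀ + min 1 #L₁ := by
  have hleaves : {v ∈ Ico 2 n | (k2SubPos n L₀ L₁).deg v ≠ 0} = L₀ ∪ L₁ := by
    ext v
    simp only [mem_filter, k2SubPos_deg_ne_zero_iff, mem_union]
    constructor
    · rintro ⟨hv, (⟨x, hx, rfl | rfl⟩ | ⟨x, hx, rfl | rfl⟩)⟩ <;> simp_all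
    · rintro (hv | hv)
      · exact ⟨h₀ hv, Or.inl ⟨v, hv, Or.inr rfl⟩⟩
      · exact ⟨h₁ hv, Or.inr ⟨v, hv, Or.inr rfl⟩⟩
  rw [SCPos.liveCount, show (k2SubPos n L₀ L₁).verts = range n from rfl, card_filter,
    ← sum_range_add_sum_Ico _ hn, sum_range_succ, sum_range_one, ← card_filter, hleaves]
  have hub₀ : (k2SubPos n L₀ L₁).deg 0 ≠ 0 ↔ 0 < #L₀ := by
    have : 0 ∉ L₁ := fun h => by simpa using h₁ h
    simp [k2SubPos_deg_ne_zero_iff, card_pos, this, Finset.Nonempty]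
  have hub₁ : (k2SubPos n L₀ L₁).deg 1 ≠ 0 ↔ 0 < #L₁ := by
    have : 1 ∉ L₀ := fun h => by simpa using h₀ h
    simp [k2SubPos_deg_ne_zero_iff, card_pos, this, Finset.Nonempty]
  simp only [hub₀, hub₁]
  split_ifs <;> omega

end K2Sub

theorem SCPos.moveOutcome_fst_add_conceded_le {α : Type*} [DecidableEq α] {p : SCPos V}
    {e : V × V} {L L' : Finset α} {x : α} (he : e ∈ p.edges) (hx : x ∈ L)
    (hp : p.liveCount = #(L ∪ L') + min 1 #L + min 1 #L')
    (hp' : (p.remove e).liveCount = #(L.erase x ∪ L') + min 1 #(L.erase x) + min 1 #L')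
    (ih : (p.remove e).score.1 + conceded #(L.erase x ∩ L') = (p.remove e).liveCount) :
    (p.moveOutcome e).1 + conceded #(L ∩ L') ≤ p.liveCount ∧
      (x ∉ L' ∨ L = L' → (p.moveOutcome e).1 + conceded #(L ∩ L') = p.liveCount) := by
  have hcaps := liveCount_eq_liveCount_remove_add_caps he
  have hval : (p.caps e = 0 ∧ (p.moveOutcome e).1 = conceded #(L.erase x ∩ L')) ∨
      (p.caps e ≠ 0 ∧ (p.moveOutcome e).1 + conceded #(L.erase x ∩ L') = p.liveCount) := by
    by_cases hc : p.caps e = 0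
    exacts [Or.inl ⟨hc, moveOutcome_fst_of_caps_eq_zero hc ih⟩,
      Or.inr ⟨hc, moveOutcome_fst_add_of_caps_ne_zero he hc ih⟩]
  have hL := card_erase_add_one hx
  have hu := card_union_add_card_inter L L'
  have hu' := card_union_add_card_inter (L.erase x) L'
  have hmL := card_le_card (inter_subset_left : L ∩ L' ⊆ L)
  have hmL' := card_le_card (inter_subset_right : L ∩ L' ⊆ L')
  by_cases hxL' : x ∈ L'
  · have hm : #(L.erase x ∩ L') + 1 = #(L ∩ L') := by
      rw [erase_inter]; exact card_erase_add_one (mem_inter.2 ⟨hx, hxL'⟩)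
    rw [← hm] at hmL hmL' hu ⊢
    have hg := conceded_pred_add_conceded (m := #(L.erase x ∩ L') + 1)
    have hg₀ := conceded_eq_zero_of_le_one (m := #(L.erase x ∩ L') + 1)
    have hg₀' := conceded_eq_zero_of_le_one (m := #(L.erase x ∩ L'))
    simp only [Nat.add_sub_cancel] at hg
    refine ⟨by omega, ?_⟩
    rintro (hxL'' | hLL')
    · exact absurd hxL' hxL''
    · have hcard : #(L ∪ L') = #L ∧ #L' = #L := by simp [hLL']
      omega
  · have hm : L.erase x ∩ L' = L ∩ L' := by
      rw [erase_inter, erase_eq_of_notMem (fun h => hxL' (mem_inter.1 h).2)]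
    rw [hm] at hval hu'
    omega

theorem k2SubPos_score_fst_add_conceded {n : ℕ} (hn : 2 ≤ n) {L₀ L₁ : Finset ℕ}
    (h₀ : L₀ ⊆ Ico 2 n) (h₁ : L₁ ⊆ Ico 2 n) :
    (k2SubPos n L₀ L₁).score.1 + conceded #(L₀ ∩ L₁) = (k2SubPos n L₀ L₁).liveCount := by
  induction hs : #L₀ + #L₁ using Nat.strong_induction_on generalizing L₀ L₁ with
  | _ s ih =>
  by_cases hE : L₀ = ∅ ∧ L₁ = ∅
  · obtain ⟨rfl, rfl⟩ := hE
    rw [SCPos.score_of_edges_eq_zero (k2SubPos_edges_eq_zero_iff.2 ⟨rfl, rfl⟩),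
      liveCount_k2SubPos hn h₀ h₁]
    rfl
  have hlive := liveCount_k2SubPos hn h₀ h₁
  have hzero {x : ℕ} (hx : x ∈ L₀) := SCPos.moveOutcome_fst_add_conceded_le (L' := L₁)
    (mem_k2SubPos_edges.2 (Or.inl ⟨x, hx, rfl⟩)) hx hlive
    (by rw [k2SubPos_remove_zero hx, liveCount_k2SubPos hn ((erase_subset _ _).trans h₀) h₁])
    (by rw [k2SubPos_remove_zero hx]
        exact ih _ (by rw [← hs, ← card_erase_add_one hx]; omega)
          ((erase_subset _ _).trans h₀) h₁ rfl)
  have hone {x : ℕ} (hx : x ∈ L₁) := SCPos.moveOutcome_fst_add_conceded_le (L' := L₀)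
    (mem_k2SubPos_edges.2 (Or.inr ⟨x, hx, rfl⟩)) hx
    (by rw [hlive, union_comm]; ring)
    (by rw [k2SubPos_remove_one hx, liveCount_k2SubPos hn h₀ ((erase_subset _ _).trans h₁),
          union_comm]; ring)
    (by rw [k2SubPos_remove_one hx, inter_comm]
        exact ih _ (by rw [← hs, ← card_erase_add_one hx]; omega)
          h₀ ((erase_subset _ _).trans h₁) rfl)
  rw [inter_comm] at hone
  refine SCPos.score_fst_add_eq_of_forall_of_exists (mt k2SubPos_edges_eq_zero_iff.1 hE) ?_ ?_
  · rintro e he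
    rcases mem_k2SubPos_edges.1 he with ⟨x, hx, rfl⟩ | ⟨x, hx, rfl⟩
    exacts [(hzero hx).1, (hone hx).1]
  · by_cases hA : ∃ x ∈ L₀, x ∉ L₁
    · obtain ⟨x, hx, hx₁⟩ := hA
      exact ⟨_, mem_k2SubPos_edges.2 (Or.inl ⟨x, hx, rfl⟩), ((hzero hx).2 (Or.inl hx₁)).ge⟩
    by_cases hC : ∃ x ∈ L₁, x ∉ L₀
    · obtain ⟨x, hx, hx₀⟩ := hC
      exact ⟨_, mem_k2SubPos_edges.2 (Or.inr ⟨x, hx, rfl⟩), ((hone hx).2 (Or.inl hx₀)).ge⟩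
    push Not at hA hC
    have hL : L₀ = L₁ := Subset.antisymm hA hC
    obtain ⟨x, hx⟩ : L₀.Nonempty := nonempty_iff_ne_empty.2 fun h => hE ⟨h, hL ▸ h⟩
    exact ⟨_, mem_k2SubPos_edges.2 (Or.inl ⟨x, hx, rfl⟩), ((hzero hx).2 (Or.inr hL)).ge⟩

theorem k2bPos_eq_k2SubPos (b : ℕ) :
    k2bPos b = k2SubPos (b + 2) (Ico 2 (b + 2)) (Ico 2 (b + 2)) := by
  simp only [k2bPos, k2SubPos, SCPos.mk.injEq, true_and]
  induction b with
  | zero => rfl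
  | succ b ih =>
    rw [List.range_succ, List.flatMap_append, ← Multiset.coe_add, ih,
      Nat.Ico_succ_right_eq_insert_Ico (by omega : 2 ≤ b + 2), insert_val_of_notMem (by simp)]
    simp only [List.flatMap_singleton, Multiset.map_cons]
    change _ + ((0, b + 2) ::ₘ (1, b + 2) ::ₘ 0) = _
    simp only [← Multiset.singleton_add]
    abel

/-- On `K(2, b)` with `b ≥ 2`, Player 1 wins when `b` is odd and Player 2 wins
when `b` is even. -/
theorem stmt15 (b : ℕ) (hb : 2 ≤ b) :
    (Odd b → ((k2bPos b).score).2 < ((k2bPos b).score).1) ∧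
    (Even b → ((k2bPos b).score).1 < ((k2bPos b).score).2) := by
  have hscore := k2SubPos_score_fst_add_conceded (n := b + 2) (by omega) Subset.rfl Subset.rfl
  have hsum := SCPos.score_fst_add_score_snd (k2SubPos (b + 2) (Ico 2 (b + 2)) (Ico 2 (b + 2)))
  rw [liveCount_k2SubPos (by omega) Subset.rfl Subset.rfl] at hscore hsum
  simp only [union_self, inter_self, Nat.card_Ico, Nat.add_sub_cancel] at hscore hsum
  rw [k2bPos_eq_k2SubPos]
  refine ⟨fun ⟨k, hk⟩ => ?_, fun ⟨k, hk⟩ => ?_⟩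
  · subst hk
    rw [(conceded_odd_even k).1] at hscore
    omega
  · obtain ⟨j, rfl⟩ : ∃ j, b = 2 * j + 2 := ⟨k - 1, by omega⟩
    rw [(conceded_odd_even j).2] at hscore
    omega
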